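/- arXiv:1502.04765 — 4 statements merged into one kernel-verified Lean document; each statement's English description precedes it below -/
import Mathlib

section
/- For real numbers ℓ₁, …, ℓ_m, define D(α) = Σ_{j=1}^m w_j(α) log(m w_j(α)), the Kullback–Leibler divergence from uniform of the tilted weights w_j(α) = exp(α ℓ_j)/Σ_{k=1}^m exp(α ℓ_k). Then D(0) = 0 and D is differentiable with D′(α) = α · Σ_{j=1}^m w_j(α) (ℓ_j − Σ_{k=1}^m w_k(α) ℓ_k)². Consequently D is nondecreasing on [0, ∞) and nonincreasing on (−∞, 0]. -/
open Finset Real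

/-!
With `Z(α) = ∑ exp (α ℓ_k)` and tilted mean `μ(α) = ∑ w_j ℓ_j`, one has
`log (m w_j) = log m + α ℓ_j - log Z`, so `D = log m + α μ - log Z`. Since `(log Z)' = μ` and
`μ'` is the tilted variance, the two copies of `μ` cancel in `D'`, leaving `α` times a variance.
-/

section Tilted

variable {ι : Type*} [Fintype ι] (ℓ : ι → ℝ)

noncomputable def tiltPartition (α : ℝ) : ℝ := ∑ k, exp (α * ℓ k)

noncomputable def tiltedWeight (α : ℝ) (j : ι) : ℝ := exp (α * ℓ j) / tiltPartition ℓ α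

noncomputable def tiltedMean (α : ℝ) : ℝ := ∑ j, tiltedWeight ℓ α j * ℓ j

noncomputable def tiltedVariance (α : ℝ) : ℝ :=
  ∑ j, tiltedWeight ℓ α j * (ℓ j - tiltedMean ℓ α) ^ 2

noncomputable def tiltedKLUniform (α : ℝ) : ℝ :=
  ∑ j, tiltedWeight ℓ α j * log (Fintype.card ι * tiltedWeight ℓ α j)

lemma tiltPartition_zero : tiltPartition ℓ 0 = Fintype.card ι := by
  simp [tiltPartition]

lemma hasDerivAt_tiltPartition (α : ℝ) :
    HasDerivAt (tiltPartition ℓ) (∑ k, exp (α * ℓ k) * ℓ k) α :=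
  HasDerivAt.fun_sum fun k _ => (hasDerivAt_mul_const (ℓ k)).exp

variable [Nonempty ι]

lemma tiltPartition_pos (α : ℝ) : 0 < tiltPartition ℓ α :=
  sum_pos (fun _ _ => exp_pos _) univ_nonempty

lemma tiltedWeight_pos (α : ℝ) (j : ι) : 0 < tiltedWeight ℓ α j :=
  div_pos (exp_pos _) (tiltPartition_pos ℓ α)

lemma sum_tiltedWeight (α : ℝ) : ∑ j, tiltedWeight ℓ α j = 1 := by
  simp only [tiltedWeight, ← sum_div]
  exact div_self (tiltPartition_pos ℓ α).ne'

lemma log_tiltedWeight (α : ℝ) (j : ι) :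
    log (tiltedWeight ℓ α j) = α * ℓ j - log (tiltPartition ℓ α) := by
  rw [tiltedWeight, log_div (exp_pos _).ne' (tiltPartition_pos ℓ α).ne', log_exp]

lemma sum_tiltedWeight_mul_sub_tiltedMean (α : ℝ) :
    ∑ j, tiltedWeight ℓ α j * (ℓ j - tiltedMean ℓ α) = 0 := by
  simp only [mul_sub, sum_sub_distrib, ← sum_mul, sum_tiltedWeight, one_mul, tiltedMean, sub_self]

lemma hasDerivAt_log_tiltPartition (α : ℝ) :
    HasDerivAt (fun β => log (tiltPartition ℓ β)) (tiltedMean ℓ α) α := by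
  convert (hasDerivAt_tiltPartition ℓ α).log (tiltPartition_pos ℓ α).ne' using 1
  simp only [tiltedMean, tiltedWeight, sum_div, div_mul_eq_mul_div]

/-- `w_j = exp (α ℓ_j - log Z)`, so this is the chain rule with `(log Z)' = μ`. -/
lemma hasDerivAt_tiltedWeight (α : ℝ) (j : ι) :
    HasDerivAt (fun β => tiltedWeight ℓ β j)
      (tiltedWeight ℓ α j * (ℓ j - tiltedMean ℓ α)) α := by
  have h_exp : (fun β => tiltedWeight ℓ β j) = fun β => exp (β * ℓ j - log (tiltPartition ℓ β)) :=
    funext fun β => by rw [← log_tiltedWeight, exp_log (tiltedWeight_pos ℓ β j)]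
  rw [h_exp, ← exp_log (tiltedWeight_pos ℓ α j), log_tiltedWeight]
  exact ((hasDerivAt_mul_const (ℓ j)).sub (hasDerivAt_log_tiltPartition ℓ α)).exp

lemma hasDerivAt_tiltedMean (α : ℝ) :
    HasDerivAt (tiltedMean ℓ) (tiltedVariance ℓ α) α := by
  have h_sum : HasDerivAt (tiltedMean ℓ)
      (∑ j, tiltedWeight ℓ α j * (ℓ j - tiltedMean ℓ α) * ℓ j) α :=
    HasDerivAt.fun_sum fun j _ => (hasDerivAt_tiltedWeight ℓ α j).mul_const (ℓ j)
  convert h_sum using 1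
  -- `∑ w (ℓ - μ) ℓ` and `∑ w (ℓ - μ)²` differ by `μ ∑ w (ℓ - μ) = 0`
  have h_centered := congrArg (· * tiltedMean ℓ α) (sum_tiltedWeight_mul_sub_tiltedMean ℓ α)
  simp only [sum_mul, zero_mul] at h_centered
  rw [tiltedVariance, ← add_zero (∑ j, _), ← h_centered, ← sum_add_distrib]
  exact sum_congr rfl fun j _ => by ring

lemma tiltedVariance_nonneg (α : ℝ) : 0 ≤ tiltedVariance ℓ α :=
  sum_nonneg fun j _ => mul_nonneg (tiltedWeight_pos ℓ α j).le (sq_nonneg _)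

lemma tiltedKLUniform_eq (α : ℝ) :
    tiltedKLUniform ℓ α = log (Fintype.card ι) + α * tiltedMean ℓ α - log (tiltPartition ℓ α) := by
  have h_card : (Fintype.card ι : ℝ) ≠ 0 := by positivity
  calc tiltedKLUniform ℓ α
      = ∑ j, ((log (Fintype.card ι) - log (tiltPartition ℓ α)) * tiltedWeight ℓ α j
          + α * (tiltedWeight ℓ α j * ℓ j)) := by
        refine sum_congr rfl fun j _ => ?_
        rw [log_mul h_card (tiltedWeight_pos ℓ α j).ne', log_tiltedWeight]
        ring
    _ = log (Fintype.card ι) + α * tiltedMean ℓ α - log (tiltPartition ℓ α) := by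
        rw [sum_add_distrib, ← mul_sum, ← mul_sum, sum_tiltedWeight, tiltedMean]
        ring

lemma tiltedKLUniform_zero : tiltedKLUniform ℓ 0 = 0 := by
  rw [tiltedKLUniform_eq, tiltPartition_zero]
  ring

lemma hasDerivAt_tiltedKLUniform (α : ℝ) :
    HasDerivAt (tiltedKLUniform ℓ) (α * tiltedVariance ℓ α) α := by
  have h : HasDerivAt
      (fun β => log (Fintype.card ι) + β * tiltedMean ℓ β - log (tiltPartition ℓ β))
      (1 * tiltedMean ℓ α + α * tiltedVariance ℓ α - tiltedMean ℓ α) α :=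
    (((hasDerivAt_id' α).mul (hasDerivAt_tiltedMean ℓ α)).const_add _).sub
      (hasDerivAt_log_tiltPartition ℓ α)
  rw [funext (tiltedKLUniform_eq ℓ)]
  convert h using 1
  ring

lemma monotoneOn_tiltedKLUniform : MonotoneOn (tiltedKLUniform ℓ) (Set.Ici 0) := by
  refine monotoneOn_of_hasDerivWithinAt_nonneg (convex_Ici 0)
    (fun α _ => (hasDerivAt_tiltedKLUniform ℓ α).continuousAt.continuousWithinAt)
    (fun α _ => (hasDerivAt_tiltedKLUniform ℓ α).hasDerivWithinAt) fun α hα => ?_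
  rw [interior_Ici] at hα
  exact mul_nonneg (le_of_lt hα) (tiltedVariance_nonneg ℓ α)

lemma antitoneOn_tiltedKLUniform : AntitoneOn (tiltedKLUniform ℓ) (Set.Iic 0) := by
  refine antitoneOn_of_hasDerivWithinAt_nonpos (convex_Iic 0)
    (fun α _ => (hasDerivAt_tiltedKLUniform ℓ α).continuousAt.continuousWithinAt)
    (fun α _ => (hasDerivAt_tiltedKLUniform ℓ α).hasDerivWithinAt) fun α hα => ?_
  rw [interior_Iic] at hα
  exact mul_nonpos_of_nonpos_of_nonneg (le_of_lt hα) (tiltedVariance_nonneg ℓ α)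

end Tilted

/-- The divergence-from-uniform of the tilted weights, `D(α) = ∑ w_j(α) log(m w_j(α))`,
satisfies `D(0) = 0`, is differentiable with derivative
`α ∑ w_j(α)(ℓ_j − ∑ w_k(α) ℓ_k)²`, is nondecreasing on `[0, ∞)` and nonincreasing on
`(−∞, 0]`. -/
theorem tilted_kl_deriv (m : ℕ) (hm : 0 < m) (ℓ : Fin m → ℝ)
    (w : ℝ → Fin m → ℝ)
    (hw : ∀ α j, w α j = Real.exp (α * ℓ j) / ∑ k, Real.exp (α * ℓ k))
    (D : ℝ → ℝ) (hD : ∀ α, D α = ∑ j, w α j * Real.log (m * w α j)) :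
    D 0 = 0 ∧
    (∀ α, HasDerivAt D (α * ∑ j, w α j * (ℓ j - ∑ k, w α k * ℓ k) ^ 2) α) ∧
    MonotoneOn D (Set.Ici 0) ∧
    AntitoneOn D (Set.Iic 0) := by
  have : Nonempty (Fin m) := ⟨⟨0, hm⟩⟩
  obtain rfl : w = tiltedWeight ℓ := funext fun α => funext (hw α)
  obtain rfl : D = tiltedKLUniform ℓ := funext fun α => by
    rw [hD, tiltedKLUniform, Fintype.card_fin]
  exact ⟨tiltedKLUniform_zero ℓ, hasDerivAt_tiltedKLUniform ℓ, monotoneOn_tiltedKLUniform ℓ,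
    antitoneOn_tiltedKLUniform ℓ⟩
end

section
/- Let ℓ₁, …, ℓ_m be real numbers that are not all equal, and let ξ > 0. Suppose w* = (w*₁, …, w*_m), with w*_j > 0 for all j and Σ_j w*_j = 1, is a local maximizer of the linear objective w ↦ Σ_{j=1}^m w_j ℓ_j over probability vectors subject to the constraint Σ_{j=1}^m w_j log(m w_j) = ξ. Then there exist real constants α₁ and α₂ > 0 such that w*_j = α₂ exp(α₁ ℓ_j) for every j = 1, …, m; that is, the constrained maximizing weights have the exponential tilting form. -/
open Finset Real Filter Topology

/-! At a positive point of the level set, Lagrange multipliers give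
`λ₀ + λ₁ (log (m w_j) + 1) + λ ℓ_j = 0` for every `j`, with `(λ₀, λ₁, λ) ≠ 0`. If `λ₁ = 0`, the
relation `λ₀ + λ ℓ_j = 0` forces `λ = λ₀ = 0` because `ℓ` is not constant; hence `λ₁ ≠ 0` and
`log (m w_j)` is an affine function of `ℓ_j`. -/

theorem IsLocalMaxOn.of_inter_mem_nhds {α β : Type*} [TopologicalSpace α] [Preorder β]
    {f : α → β} {s t : Set α} {a : α} (hf : IsLocalMaxOn f (t ∩ s) a) (ht : t ∈ 𝓝 a) :
    IsLocalMaxOn f s a := by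
  rwa [IsLocalMaxOn, nhdsWithin_inter_of_mem (mem_nhdsWithin_of_mem_nhds ht)] at hf

theorem hasStrictDerivAt_mul_log_const_mul {c t : ℝ} (hc : c ≠ 0) (ht : t ≠ 0) :
    HasStrictDerivAt (fun t => t * log (c * t)) (log (c * t) + 1) t := by
  have hlog := (hasStrictDerivAt_log (mul_ne_zero hc ht)).comp t
    ((hasStrictDerivAt_id t).const_mul c)
  refine ((hasStrictDerivAt_id t).mul hlog).congr_deriv ?_
  field_simp
  simp only [Function.comp_apply, id]
  ring

theorem hasStrictFDerivAt_sum_apply {ι : Type*} [Fintype ι] {g : ι → ℝ → ℝ} {g' : ι → ℝ}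
    {w : ι → ℝ} (hg : ∀ j, HasStrictDerivAt (g j) (g' j) (w j)) :
    HasStrictFDerivAt (fun v : ι → ℝ => ∑ j, g j (v j))
      (∑ j, g' j • (ContinuousLinearMap.proj j : (ι → ℝ) →L[ℝ] ℝ)) w :=
  HasStrictFDerivAt.fun_sum fun j _ =>
    (hg j).comp_hasStrictFDerivAt w (hasStrictFDerivAt_apply j w)

theorem IsLocalExtrOn.exists_multipliers_of_sum_apply {ι κ : Type*} [Fintype ι] [Fintype κ]
    {g : κ → ι → ℝ → ℝ} {g' : κ → ι → ℝ} {φ : ι → ℝ → ℝ} {φ' : ι → ℝ} {w : ι → ℝ}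
    (hextr : IsLocalExtrOn (fun v => ∑ j, φ j (v j))
      {v | ∀ i, ∑ j, g i j (v j) = ∑ j, g i j (w j)} w)
    (hg : ∀ i j, HasStrictDerivAt (g i j) (g' i j) (w j))
    (hφ : ∀ j, HasStrictDerivAt (φ j) (φ' j) (w j)) :
    ∃ (Λ : κ → ℝ) (Λ₀ : ℝ), (Λ, Λ₀) ≠ 0 ∧ ∀ j, ∑ i, Λ i * g' i j + Λ₀ * φ' j = 0 := by
  classical
  obtain ⟨Λ, Λ₀, hΛ, hrel⟩ := hextr.exists_multipliers_of_hasStrictFDerivAt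
    (fun i => hasStrictFDerivAt_sum_apply (hg i)) (hasStrictFDerivAt_sum_apply hφ)
  refine ⟨Λ, Λ₀, hΛ, fun j => ?_⟩
  simpa [Pi.single_apply] using DFunLike.congr_fun hrel (Pi.single j 1)

theorem exists_eq_add_mul_of_add_mul_add_mul_eq_zero {ι : Type*} {x y : ι → ℝ} {a b c : ℝ}
    (hy : ∃ j k, y j ≠ y k) (habc : (a, b, c) ≠ 0) (hrel : ∀ j, a + b * x j + c * y j = 0) :
    ∃ α β, ∀ j, x j = α + β * y j := by
  have hb : b ≠ 0 := by
    rintro rfl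
    obtain ⟨j, k, hjk⟩ := hy
    have hc : c = 0 := by
      by_contra hc
      exact hjk (mul_left_cancel₀ hc (by linarith [hrel j, hrel k]))
    have ha : a = 0 := by simpa [hc] using hrel j
    exact habc (by simp [ha, hc])
  exact ⟨-a / b, -c / b, fun j => by field_simp; linarith [hrel j]⟩

theorem exists_log_mul_eq_add_mul_of_isLocalMaxOn {ι : Type*} [Fintype ι] {c : ℝ} (hc : c ≠ 0)
    {ℓ w : ι → ℝ} (hℓ : ∃ j k, ℓ j ≠ ℓ k) (hw : ∀ j, w j ≠ 0)
    (hmax : IsLocalMaxOn (fun v => ∑ j, v j * ℓ j)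
      {v | ∑ j, v j = ∑ j, w j ∧ ∑ j, v j * log (c * v j) = ∑ j, w j * log (c * w j)} w) :
    ∃ α β, ∀ j, log (c * w j) = α + β * ℓ j := by
  have hextr : IsLocalExtrOn (fun v => ∑ j, (fun j t => t * ℓ j) j (v j))
      {v | ∀ i, ∑ j, ![fun (_ : ι) t => t, fun _ t => t * log (c * t)] i j (v j) =
        ∑ j, ![fun (_ : ι) t => t, fun _ t => t * log (c * t)] i j (w j)} w := by
    refine .inr ?_
    simpa [IsLocalMaxOn, Fin.forall_fin_two] using hmax
  obtain ⟨Λ, Λ₀, hΛ, hrel⟩ := hextr.exists_multipliers_of_sum_apply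
    (g' := ![fun _ => 1, fun j => log (c * w j) + 1]) (φ' := ℓ)
    (fun i j => by
      fin_cases i
      · exact hasStrictDerivAt_id _
      · exact hasStrictDerivAt_mul_log_const_mul hc (hw j))
    (fun j => (hasStrictDerivAt_id _).mul_const _ |>.congr_deriv (one_mul _))
  refine exists_eq_add_mul_of_add_mul_add_mul_eq_zero hℓ
    (a := Λ 0 + Λ 1) (b := Λ 1) (c := Λ₀) ?_ fun j => ?_
  · contrapose! hΛ
    obtain ⟨h01, h1, h0⟩ : Λ 0 + Λ 1 = 0 ∧ Λ 1 = 0 ∧ Λ₀ = 0 := by simpa using hΛ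
    refine Prod.ext (funext <| Fin.forall_fin_two.2 ⟨?_, h1⟩) h0
    change Λ 0 = 0
    linarith
  · have := hrel j
    simp only [Fin.sum_univ_two, Matrix.cons_val_zero, Matrix.cons_val_one] at this
    linarith

theorem constrained_max_is_exponential_tilt_general (m : ℕ) (hm : 0 < m) (ℓ : Fin m → ℝ)
    (hne : ∃ j k, ℓ j ≠ ℓ k) (ξ : ℝ)
    (w : Fin m → ℝ) (hpos : ∀ j, 0 < w j) (hsum : ∑ j, w j = 1)
    (hconstr : ∑ j, w j * Real.log (m * w j) = ξ)
    (hmax : IsLocalMaxOn (fun v : Fin m → ℝ => ∑ j, v j * ℓ j)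
      {v : Fin m → ℝ | (∀ j, 0 < v j) ∧ (∑ j, v j = 1) ∧
        (∑ j, v j * Real.log (m * v j) = ξ)} w) :
    ∃ α₁ α₂ : ℝ, 0 < α₂ ∧ ∀ j, w j = α₂ * Real.exp (α₁ * ℓ j) := by
  have hm : (0 : ℝ) < m := Nat.cast_pos.2 hm
  have hpos_nhds : {v : Fin m → ℝ | ∀ j, 0 < v j} ∈ 𝓝 w :=
    eventually_all.2 fun j => (continuous_apply j).continuousAt (Ioi_mem_nhds (hpos j))
  have hmax_level : IsLocalMaxOn (fun v : Fin m → ℝ => ∑ j, v j * ℓ j)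
      {v | ∑ j, v j = ∑ j, w j ∧ ∑ j, v j * log (m * v j) = ∑ j, w j * log (m * w j)} w := by
    rw [hsum, hconstr]
    exact IsLocalMaxOn.of_inter_mem_nhds (by simpa only [Set.ofPred_and] using hmax) hpos_nhds
  obtain ⟨α, β, hlog⟩ :=
    exists_log_mul_eq_add_mul_of_isLocalMaxOn hm.ne' hne (fun j => (hpos j).ne') hmax_level
  refine ⟨β, exp α / m, by positivity, fun j => ?_⟩
  have := exp_log (mul_pos hm (hpos j))
  rw [hlog j, exp_add] at this
  field_simp
  linarith

/-- Any strictly positive probability vector that locally maximizes the linear objective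
`w ↦ ∑ w_j ℓ_j` subject to the divergence constraint `∑ w_j log(m w_j) = ξ`, `ξ > 0`,
has the exponential tilting form `w_j = α₂ exp(α₁ ℓ_j)` with `α₂ > 0`. -/
theorem constrained_max_is_exponential_tilt (m : ℕ) (hm : 0 < m) (ℓ : Fin m → ℝ)
    (hne : ∃ j k, ℓ j ≠ ℓ k) (ξ : ℝ) (hξ : 0 < ξ)
    (w : Fin m → ℝ) (hpos : ∀ j, 0 < w j) (hsum : ∑ j, w j = 1)
    (hconstr : ∑ j, w j * Real.log (m * w j) = ξ)
    (hmax : IsLocalMaxOn (fun v : Fin m → ℝ => ∑ j, v j * ℓ j)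
      {v : Fin m → ℝ | (∀ j, 0 < v j) ∧ (∑ j, v j = 1) ∧
        (∑ j, v j * Real.log (m * v j) = ξ)} w) :
    ∃ α₁ α₂ : ℝ, 0 < α₂ ∧ ∀ j, w j = α₂ * Real.exp (α₁ * ℓ j) :=
  constrained_max_is_exponential_tilt_general m hm ℓ hne ξ w hpos hsum hconstr hmax
end

section
/- (Lemma 1.) Let Θ ⊆ ℝ^p be open, let ℓ_j : Θ → ℝ (j = 1, …, m) and α₁ : Θ → ℝ be differentiable, define the tilted weights w_j(θ) = exp(α₁(θ) ℓ_j(θ))/Σ_{k=1}^m exp(α₁(θ) ℓ_k(θ)) and the composite objective ℓ(θ) = Σ_{j=1}^m w_j(θ) ℓ_j(θ). If the divergence constraint Σ_{j=1}^m w_j(θ) log(m w_j(θ)) = ξ holds identically in θ on Θ for a fixed constant ξ, then for every θ ∈ Θ one has α₁(θ) · ( ∇_θ ℓ(θ) − Σ_{j=1}^m w_j(θ) ∇_θ ℓ_j(θ) ) = 0; in particular, at every θ with α₁(θ) ≠ 0 the gradient of the composite objective equals the weighted sum of the gradients: ∇_θ ℓ(θ) = Σ_{j=1}^m w_j(θ)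 ∇_θ ℓ_j(θ). -/
/-!
Write `s_k = α₁ ℓ_k` and `Z = ∑ exp s_k`, so that `log w_j = s_j - log Z`. Then the divergence is
`log m + α₁ ℓ - log Z`, and the constraint says that `α₁ ℓ - log Z` is locally constant on `Θ`, so
its differential vanishes. The product rule gives `α₁ ∇ℓ + ℓ ∇α₁` for the first term, while
`∇ log Z = ∑ w_k ∇s_k = α₁ ∑ w_k ∇ℓ_k + ℓ ∇α₁`; the `∇α₁` terms cancel.
-/

open Finset Real Filter Topology

noncomputable def softmax {ι : Type*} [Fintype ι] (s : ι → ℝ) (j : ι) : ℝ :=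
  exp (s j) / ∑ k, exp (s k)

section Softmax

variable {ι : Type*} [Fintype ι] [Nonempty ι] (s : ι → ℝ)

lemma sum_exp_pos : 0 < ∑ k, exp (s k) :=
  sum_pos (fun _ _ => exp_pos _) univ_nonempty

lemma softmax_pos (j : ι) : 0 < softmax s j :=
  div_pos (exp_pos _) (sum_exp_pos s)

lemma sum_softmax : ∑ j, softmax s j = 1 := by
  simp only [softmax, ← sum_div]
  exact div_self (sum_exp_pos s).ne'

lemma log_softmax (j : ι) : log (softmax s j) = s j - log (∑ k, exp (s k)) := by
  rw [softmax, log_div (exp_ne_zero _) (sum_exp_pos s).ne', log_exp]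

lemma sum_softmax_mul_log_card_mul_softmax :
    ∑ j, softmax s j * log (Fintype.card ι * softmax s j)
      = ∑ j, softmax s j * s j - log (∑ k, exp (s k)) + log (Fintype.card ι) := by
  have hcard : (Fintype.card ι : ℝ) ≠ 0 := Nat.cast_ne_zero.mpr Fintype.card_ne_zero
  calc ∑ j, softmax s j * log (Fintype.card ι * softmax s j)
      = ∑ j, (softmax s j * s j
          - softmax s j * (log (∑ k, exp (s k)) - log (Fintype.card ι))) := by
        refine sum_congr rfl fun j _ => ?_
        rw [log_mul hcard (softmax_pos s j).ne', log_softmax]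
        ring
    _ = _ := by
        rw [sum_sub_distrib, ← sum_mul, sum_softmax]
        ring

end Softmax

lemma smul_add_smul_sub_sum_smul {ι M : Type*} [Fintype ι] [AddCommGroup M] [Module ℝ M]
    (a : ℝ) (B v : M) (w ℓ : ι → ℝ) (D : ι → M) :
    (a • B + (∑ k, w k * ℓ k) • v) - ∑ k, w k • (a • D k + ℓ k • v)
      = a • (B - ∑ k, w k • D k) := by
  simp only [smul_add, sum_add_distrib, smul_sub, smul_sum, smul_smul, sum_smul, mul_comm]
  abel

section Derivatives

variable {E : Type*} [NormedAddCommGroup E] [NormedSpace ℝ E] {ι : Type*} [Fintype ι]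
  [Nonempty ι] {x : E}

lemma HasFDerivAt.log_sum_exp {s : ι → E → ℝ} {s' : ι → E →L[ℝ] ℝ}
    (hs : ∀ k, HasFDerivAt (s k) (s' k) x) :
    HasFDerivAt (fun t => Real.log (∑ k, Real.exp (s k t)))
      (∑ k, softmax (fun i => s i x) k • s' k) x := by
  convert (HasFDerivAt.fun_sum fun k _ => (hs k).exp).log
    (sum_exp_pos fun i => s i x).ne' using 1
  simp only [softmax, smul_sum, smul_smul, div_eq_inv_mul]

lemma DifferentiableAt.softmax {s : ι → E → ℝ} (hs : ∀ k, DifferentiableAt ℝ (s k) x) (j : ι) :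
    DifferentiableAt ℝ (fun t => softmax (fun k => s k t) j) x := by
  have hZ : DifferentiableAt ℝ (fun t => ∑ k, Real.exp (s k t)) x :=
    DifferentiableAt.fun_sum fun k _ => (hs k).exp
  simp only [_root_.softmax, div_eq_mul_inv]
  exact (hs j).exp.mul (hZ.inv (sum_exp_pos _).ne')

theorem smul_fderiv_tilted_sub_sum_softmax_smul_eq_zero {α : E → ℝ} {ℓ : ι → E → ℝ} {ξ : ℝ}
    (hα : DifferentiableAt ℝ α x) (hℓ : ∀ k, DifferentiableAt ℝ (ℓ k) x)
    (hconst : ∀ᶠ t in 𝓝 x, ∑ j, softmax (fun k => α t * ℓ k t) j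
      * log (Fintype.card ι * softmax (fun k => α t * ℓ k t) j) = ξ) :
    α x • (fderiv ℝ (fun t => ∑ j, softmax (fun k => α t * ℓ k t) j * ℓ j t) x
      - ∑ j, softmax (fun k => α x * ℓ k x) j • fderiv ℝ (ℓ j) x) = 0 := by
  set L := fun t => ∑ j, softmax (fun k => α t * ℓ k t) j * ℓ j t
  have hs : ∀ k, HasFDerivAt (fun t => α t * ℓ k t)
      (α x • fderiv ℝ (ℓ k) x + ℓ k x • fderiv ℝ α x) x :=
    fun k => hα.hasFDerivAt.mul (hℓ k).hasFDerivAt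
  have hL : DifferentiableAt ℝ L x := DifferentiableAt.fun_sum fun j _ =>
    (DifferentiableAt.softmax (fun k => (hs k).differentiableAt) j).mul (hℓ j)
  have hF : HasFDerivAt (fun t => α t * L t - log (∑ k, exp (α t * ℓ k t)))
      ((α x • fderiv ℝ L x + L x • fderiv ℝ α x)
        - ∑ k, softmax (fun i => α x * ℓ i x) k • (α x • fderiv ℝ (ℓ k) x + ℓ k x • fderiv ℝ α x))
      x :=
    (hα.hasFDerivAt.mul hL.hasFDerivAt).sub (HasFDerivAt.log_sum_exp hs)
  have hF0 : HasFDerivAt (fun t => α t * L t - log (∑ k, exp (α t * ℓ k t)))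
      (0 : E →L[ℝ] ℝ) x := by
    refine (hasFDerivAt_const (ξ - log (Fintype.card ι)) x).congr_of_eventuallyEq ?_
    filter_upwards [hconst] with t ht
    rw [sum_softmax_mul_log_card_mul_softmax] at ht
    simp only [L, mul_sum, ← ht, mul_left_comm (α t)]
    ring
  rw [← smul_add_smul_sub_sum_smul]
  exact hF.unique hF0

end Derivatives

/-- Lemma 1: if the divergence constraint `∑ w_j(θ) log(m w_j(θ)) = ξ` holds identically
on the open set `Θ`, then `α₁(θ) (∇ℓ(θ) − ∑ w_j(θ) ∇ℓ_j(θ)) = 0` on `Θ`; in particular,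
where `α₁(θ) ≠ 0` the gradient of the composite objective is the weighted sum of the
gradients of the components. -/
theorem lemma1_gradient_identity (p m : ℕ) (hm : 0 < m)
    (Θ : Set (EuclideanSpace ℝ (Fin p))) (hΘ : IsOpen Θ)
    (ℓ : Fin m → EuclideanSpace ℝ (Fin p) → ℝ)
    (α₁ : EuclideanSpace ℝ (Fin p) → ℝ)
    (hℓdiff : ∀ j, ∀ θ ∈ Θ, DifferentiableAt ℝ (ℓ j) θ)
    (hαdiff : ∀ θ ∈ Θ, DifferentiableAt ℝ α₁ θ)
    (w : Fin m → EuclideanSpace ℝ (Fin p) → ℝ)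
    (hw : ∀ j θ, w j θ = Real.exp (α₁ θ * ℓ j θ) / ∑ k, Real.exp (α₁ θ * ℓ k θ))
    (L : EuclideanSpace ℝ (Fin p) → ℝ)
    (hL : ∀ θ, L θ = ∑ j, w j θ * ℓ j θ)
    (ξ : ℝ)
    (hconstr : ∀ θ ∈ Θ, ∑ j, w j θ * Real.log (m * w j θ) = ξ) :
    ∀ θ ∈ Θ,
      α₁ θ • (fderiv ℝ L θ - ∑ j, w j θ • fderiv ℝ (ℓ j) θ) = 0 ∧
      (α₁ θ ≠ 0 → fderiv ℝ L θ = ∑ j, w j θ • fderiv ℝ (ℓ j) θ) := by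
  intro θ hθ
  have : Nonempty (Fin m) := Fin.pos_iff_nonempty.mp hm
  obtain rfl : w = fun j t => softmax (fun k => α₁ t * ℓ k t) j := funext fun j => funext (hw j)
  obtain rfl : L = fun t => ∑ j, softmax (fun k => α₁ t * ℓ k t) j * ℓ j t := funext hL
  have hkey := smul_fderiv_tilted_sub_sum_softmax_smul_eq_zero (hαdiff θ hθ)
    (fun k => hℓdiff k θ hθ) (eventually_of_mem (hΘ.mem_nhds hθ) fun t ht => by
      rw [Fintype.card_fin]; exact hconstr t ht)
  refine ⟨hkey, fun hα => ?_⟩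
  rwa [smul_eq_zero_iff_right hα, sub_eq_zero] at hkey
end

section
/- (Proposition 2, asymptotic normality via the sandwich argument.) Let (Ω, F, P) be a probability space, Θ ⊆ ℝ^p open, θ* ∈ Θ. For each n let u_n : Ω × Θ → ℝ^p be a random field that is twice continuously differentiable in θ, and let θ̂_n : Ω → Θ be measurable with u_n(ω, θ̂_n(ω)) = 0 for all ω. Assume: (i) θ̂_n → θ* in probability; (ii) √n · u_n(·, θ*) converges in distribution to the p-variate Gaussian N_p(0, K) for a positive semidefinite matrix K; (iii) the Jacobian ∇_θ u_n(·, θ*) converges in probability to an invertible p × p matrix A; (iv) there exist a neighborhood B of θ* and a constant κ such that P( sup_{θ∈B} ‖∇²_θ u_n(·, θ)‖ ≤ κ ) → 1 as n → ∞. Then √n (θ̂_n − θ*) converges in distribution to the p-variate Gaussian N_p(0, A⁻¹ K (A⁻¹)ᵀ). -/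
open Filter Topology MeasureTheory Matrix

/-- `X_n` converges in distribution (weakly) to the law `γ` under `μ`: expectations of
every bounded continuous function converge. -/
def TendstoInDistribution {Ω E : Type*} [MeasurableSpace Ω] [MeasurableSpace E] [TopologicalSpace E]
    (X : ℕ → Ω → E) (μ : Measure Ω) (γ : Measure E) : Prop :=
  ∀ f : BoundedContinuousFunction E ℝ,
    Tendsto (fun n => ∫ ω, f (X n ω) ∂μ) atTop (𝓝 (∫ x, f x ∂γ))

/-- `γ` is the centered `p`-variate Gaussian law with covariance matrix `K`: every linear
functional `x ↦ ∑ v_i x_i` pushes `γ` forward to the real Gaussian `N(0, vᵀ K v)`. -/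
def IsCenteredGaussianCov {p : ℕ} (γ : Measure (EuclideanSpace ℝ (Fin p)))
    (K : Matrix (Fin p) (Fin p) ℝ) : Prop :=
  ∀ v : Fin p → ℝ,
    γ.map (fun x => ∑ i, v i * x i)
      = ProbabilityTheory.gaussianReal 0 (Real.toNNReal (v ⬝ᵥ K.mulVec v))

/-!
Put `X_n = √n u_n(·, θ*)` and `Y_n = √n (θ̂_n − θ*)`. A second-order expansion of `u_n` at the
root `θ̂_n` gives `‖X_n + A Y_n‖ ≤ (κ ‖θ̂_n − θ*‖ + ‖∇u_n(θ*) − A‖) ‖Y_n‖`; once the bracket is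
small this can be inverted, so `Y_n + A⁻¹ X_n` is small wherever `X_n` is bounded, on events whose
probability tends to one. As `X_n` converges in distribution it is tight, and a Slutsky-type
argument then carries its Gaussian limit `N(0, K)` through `x ↦ −A⁻¹ x` to `N(0, A⁻¹ K A⁻ᵀ)`.

The score `u_n(·, θ*)` and the Jacobian and Hessian events are not assumed measurable, so the
probabilities of events involving them are outer measures throughout.
-/

section EuclideanNorms

variable {ι : Type*} [Fintype ι]

theorem EuclideanSpace.norm_le_sum_abs (x : EuclideanSpace ℝ ι) : ‖x‖ ≤ ∑ i, |x i| := by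
  classical
  conv_lhs => rw [← (EuclideanSpace.basisFun ι ℝ).sum_repr x]
  refine (norm_sum_le _ _).trans_eq ?_
  simp [norm_smul]

variable [DecidableEq ι]

theorem ContinuousLinearMap.opNorm_le_sum_norm_apply_single {F : Type*}
    [SeminormedAddCommGroup F] [NormedSpace ℝ F] (T : EuclideanSpace ℝ ι →L[ℝ] F) :
    ‖T‖ ≤ ∑ j, ‖T (EuclideanSpace.single j 1)‖ := by
  refine T.opNorm_le_bound (by positivity) fun x => ?_
  conv_lhs => rw [← (EuclideanSpace.basisFun ι ℝ).sum_repr x]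
  rw [map_sum, Finset.sum_mul]
  refine (norm_sum_le _ _).trans (Finset.sum_le_sum fun j _ => ?_)
  rw [map_smul, norm_smul, mul_comm, EuclideanSpace.basisFun_apply,
    EuclideanSpace.basisFun_repr]
  exact mul_le_mul_of_nonneg_left (PiLp.norm_apply_le x j) (norm_nonneg _)

theorem ContinuousLinearMap.opNorm_le_sum_abs_apply_single
    (T : EuclideanSpace ℝ ι →L[ℝ] EuclideanSpace ℝ ι) :
    ‖T‖ ≤ ∑ j, ∑ i, |T (EuclideanSpace.single j 1) i| :=
  T.opNorm_le_sum_norm_apply_single.trans <|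
    Finset.sum_le_sum fun _ _ => EuclideanSpace.norm_le_sum_abs _

theorem Matrix.toEuclideanCLM_single_apply (A : Matrix ι ι ℝ) (i j : ι) :
    toEuclideanCLM (𝕜 := ℝ) A (EuclideanSpace.single j 1) i = A i j := by
  simp [EuclideanSpace.single]

end EuclideanNorms

theorem IsCenteredGaussianCov.map_toEuclideanCLM {p : ℕ} {γ : Measure (EuclideanSpace ℝ (Fin p))}
    {K : Matrix (Fin p) (Fin p) ℝ} (h : IsCenteredGaussianCov γ K) (M : Matrix (Fin p) (Fin p) ℝ) :
    IsCenteredGaussianCov (γ.map (toEuclideanCLM (𝕜 := ℝ) M)) (M * K * Mᵀ) := by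
  intro v
  have hlin : (fun x : EuclideanSpace ℝ (Fin p) => ∑ i, v i * x i) ∘ toEuclideanCLM (𝕜 := ℝ) M
      = fun x => ∑ i, (v ᵥ* M) i * x i := by
    ext x
    exact dotProduct_mulVec v M x
  rw [Measure.map_map (by fun_prop) (toEuclideanCLM (𝕜 := ℝ) M).continuous.measurable, hlin, h]
  simp only [Matrix.mul_assoc, ← mulVec_mulVec, mulVec_transpose, dotProduct_mulVec]

section Calculus

variable {E F : Type*} [NormedAddCommGroup E] [NormedSpace ℝ E] [NormedAddCommGroup F]
  [NormedSpace ℝ F]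

theorem Convex.norm_image_sub_sub_fderiv_le {u : E → F} {s : Set E} {κ : ℝ} {x y : E}
    (hs : Convex ℝ s) (hu : Differentiable ℝ u) (hu' : Differentiable ℝ (fderiv ℝ u))
    (hbound : ∀ θ ∈ s, ‖fderiv ℝ (fderiv ℝ u) θ‖ ≤ κ) (hx : x ∈ s) (hy : y ∈ s) :
    ‖u y - u x - fderiv ℝ u x (y - x)‖ ≤ κ * ‖y - x‖ ^ 2 := by
  have hκ : 0 ≤ κ := (ContinuousLinearMap.opNorm_nonneg _).trans (hbound x hx)
  set t := s ∩ Metric.closedBall x ‖y - x‖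
  have ht : Convex ℝ t := hs.inter (convex_closedBall _ _)
  have hxt : x ∈ t := ⟨hx, Metric.mem_closedBall_self (norm_nonneg _)⟩
  have hyt : y ∈ t := ⟨hy, by rw [Metric.mem_closedBall, dist_eq_norm]⟩
  have hderiv : ∀ θ ∈ t, ‖fderiv ℝ u θ - fderiv ℝ u x‖ ≤ κ * ‖y - x‖ := fun θ hθ =>
    calc ‖fderiv ℝ u θ - fderiv ℝ u x‖ ≤ κ * ‖θ - x‖ :=
          ht.norm_image_sub_le_of_norm_fderiv_le (fun z _ => hu' z) (fun z hz => hbound z hz.1)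
            hxt hθ
      _ ≤ κ * ‖y - x‖ := by gcongr; rw [← dist_eq_norm]; exact hθ.2
  calc ‖u y - u x - fderiv ℝ u x (y - x)‖ ≤ κ * ‖y - x‖ * ‖y - x‖ :=
        ht.norm_image_sub_le_of_norm_fderiv_le' (fun z _ => hu z) hderiv hxt hyt
    _ = κ * ‖y - x‖ ^ 2 := by ring

theorem ContinuousLinearMap.norm_add_apply_le_of_leftInverse {T : E →L[ℝ] F} {S : F →L[ℝ] E}
    (hST : ∀ y, S (T y) = y) {X : F} {Y : E} {η : ℝ} (hη : 0 ≤ η)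
    (hXY : ‖X + T Y‖ ≤ η * ‖Y‖) (hSη : ‖S‖ * η ≤ 1 / 2) :
    ‖Y + S X‖ ≤ 2 * ‖S‖ ^ 2 * η * ‖X‖ := by
  have hnear : ‖Y + S X‖ ≤ ‖S‖ * η * ‖Y‖ :=
    calc ‖Y + S X‖ = ‖S (X + T Y)‖ := by rw [map_add, hST, add_comm]
      _ ≤ ‖S‖ * ‖X + T Y‖ := S.le_opNorm _
      _ ≤ ‖S‖ * (η * ‖Y‖) := mul_le_mul_of_nonneg_left hXY (norm_nonneg _)
      _ = ‖S‖ * η * ‖Y‖ := by ring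
  have hY : ‖Y‖ ≤ 2 * ‖S‖ * ‖X‖ := by
    have : ‖Y‖ ≤ ‖Y + S X‖ + ‖S‖ * ‖X‖ :=
      calc ‖Y‖ = ‖(Y + S X) - S X‖ := by rw [add_sub_cancel_right]
        _ ≤ ‖Y + S X‖ + ‖S X‖ := norm_sub_le _ _
        _ ≤ ‖Y + S X‖ + ‖S‖ * ‖X‖ := add_le_add_right (S.le_opNorm X) _
    nlinarith [mul_le_mul_of_nonneg_right hSη (norm_nonneg Y)]
  calc ‖Y + S X‖ ≤ ‖S‖ * η * (2 * ‖S‖ * ‖X‖) :=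
        hnear.trans (mul_le_mul_of_nonneg_left hY (mul_nonneg (norm_nonneg _) hη))
    _ = 2 * ‖S‖ ^ 2 * η * ‖X‖ := by ring

theorem norm_smul_sub_add_leftInverse_apply_le {u : E → F} (hu : Differentiable ℝ u)
    (hu' : Differentiable ℝ (fderiv ℝ u)) {θ₀ θ₁ : E} (hroot : u θ₁ = 0) {r κ : ℝ}
    (hHess : ∀ θ ∈ Metric.closedBall θ₀ r, ‖fderiv ℝ (fderiv ℝ u) θ‖ ≤ κ)
    (hθ₁ : ‖θ₁ - θ₀‖ ≤ r) {T : E →L[ℝ] F} {S : F →L[ℝ] E} (hST : ∀ y, S (T y) = y)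
    {s : ℝ} (hs : 0 ≤ s) (hsmall : ‖S‖ * (κ * r + ‖fderiv ℝ u θ₀ - T‖) ≤ 1 / 2) :
    ‖s • (θ₁ - θ₀) + S (s • u θ₀)‖
      ≤ 2 * ‖S‖ ^ 2 * (κ * r + ‖fderiv ℝ u θ₀ - T‖) * ‖s • u θ₀‖ := by
  set D := fderiv ℝ u θ₀
  have hr : 0 ≤ r := (norm_nonneg _).trans hθ₁
  have hmem : θ₀ ∈ Metric.closedBall θ₀ r := Metric.mem_closedBall_self hr
  have hκ : 0 ≤ κ := (ContinuousLinearMap.opNorm_nonneg _).trans (hHess θ₀ hmem)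
  have htaylor : ‖u θ₁ - u θ₀ - D (θ₁ - θ₀)‖ ≤ κ * r * ‖θ₁ - θ₀‖ := by
    refine ((convex_closedBall θ₀ r).norm_image_sub_sub_fderiv_le hu hu' hHess hmem
      (by rwa [Metric.mem_closedBall, dist_eq_norm])).trans ?_
    rw [sq, ← mul_assoc]
    gcongr
  have hsplit : s • u θ₀ + T (s • (θ₁ - θ₀))
      = -(s • (u θ₁ - u θ₀ - D (θ₁ - θ₀))) - (D - T) (s • (θ₁ - θ₀)) := by
    simp only [hroot, map_smul, _root_.sub_apply]
    module
  refine ContinuousLinearMap.norm_add_apply_le_of_leftInverse hST (by positivity) ?_ hsmall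
  rw [hsplit]
  calc _ ≤ ‖s • (u θ₁ - u θ₀ - D (θ₁ - θ₀))‖ + ‖(D - T) (s • (θ₁ - θ₀))‖ := by
        rw [← norm_neg (s • _)]; exact norm_sub_le _ _
    _ ≤ s * (κ * r * ‖θ₁ - θ₀‖) + ‖D - T‖ * ‖s • (θ₁ - θ₀)‖ := by
        rw [norm_smul, Real.norm_of_nonneg hs]
        gcongr
        exact (D - T).le_opNorm _
    _ = (κ * r + ‖D - T‖) * ‖s • (θ₁ - θ₀)‖ := by
        rw [norm_smul, Real.norm_of_nonneg hs]; ring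

end Calculus

section OuterMeasure

variable {Ω : Type*} [MeasurableSpace Ω] {μ : Measure Ω}

theorem tendsto_measure_sum_lt {ι : Type*} (s : Finset ι) {f : ι → ℕ → Ω → ℝ}
    (hf : ∀ i ∈ s, ∀ ε > 0, Tendsto (fun n => μ {ω | ε < f i n ω}) atTop (𝓝 0)) :
    ∀ ε > 0, Tendsto (fun n => μ {ω | ε < ∑ i ∈ s, f i n ω}) atTop (𝓝 0) := by
  classical
  induction s using Finset.induction_on with
  | empty => intro ε hε; simp [not_lt.2 hε.le]
  | insert i s hi ih =>
    intro ε hε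
    have hsplit : ∀ n, {ω | ε < ∑ k ∈ insert i s, f k n ω}
        ⊆ {ω | ε / 2 < f i n ω} ∪ {ω | ε / 2 < ∑ k ∈ s, f k n ω} := fun n ω hω => by
      by_contra h
      simp only [Set.mem_union, Set.mem_ofPred_eq, not_or, not_lt] at h hω
      rw [Finset.sum_insert hi] at hω
      linarith
    have hlim := (hf i (s.mem_insert_self i) _ (half_pos hε)).add
      (ih (fun k hk => hf k (Finset.mem_insert_of_mem hk)) _ (half_pos hε))
    rw [add_zero] at hlim
    exact tendsto_of_tendsto_of_tendsto_of_le_of_le tendsto_const_nhds hlim (fun _ => zero_le)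
      fun n => (measure_mono (hsplit n)).trans (measure_union_le _ _)

theorem tendsto_measure_of_sdiff_subset [IsProbabilityMeasure μ] {G H C : ℕ → Set Ω}
    (hH : Tendsto (fun n => μ (H n)) atTop (𝓝 1)) (hC : Tendsto (fun n => μ (C n)) atTop (𝓝 0))
    (hsub : ∀ n, H n \ C n ⊆ G n) : Tendsto (fun n => μ (G n)) atTop (𝓝 1) := by
  have hlow : Tendsto (fun n => μ (H n) - μ (C n)) atTop (𝓝 1) := by
    simpa using ENNReal.Tendsto.sub hH hC (Or.inl ENNReal.one_ne_top)
  exact tendsto_of_tendsto_of_tendsto_of_le_of_le hlow tendsto_const_nhds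
    (fun n => le_measure_sdiff.trans (measure_mono (hsub n))) fun _ => prob_le_one

theorem measureReal_le_one_sub_add_inter [IsProbabilityMeasure μ] {s : Set Ω}
    (hs : NullMeasurableSet s μ) (t : Set Ω) : μ.real s ≤ 1 - μ.real t + μ.real (t ∩ s) := by
  have hcompl := measureReal_add_measureReal_compl₀ (μ := μ) hs
  have hsplit := measureReal_inter_add_sdiff₀ (μ := μ) (s := t) hs
  have hdiff : μ.real (t \ s) ≤ μ.real sᶜ := measureReal_mono fun ω hω => hω.2
  rw [probReal_univ] at hcompl
  linarith

theorem abs_integral_le_add_mul_measureReal [IsProbabilityMeasure μ] {φ : Ω → ℝ}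
    (hφ : Integrable φ μ) {ε C : ℝ} (hε : 0 ≤ ε) (hC : ∀ ω, |φ ω| ≤ C) :
    |∫ ω, φ ω ∂μ| ≤ ε + C * μ.real {ω | ε < |φ ω|} := by
  set S := toMeasurable μ {ω | ε < |φ ω|}
  have hS : MeasurableSet S := measurableSet_toMeasurable _ _
  have hpt : ∀ ω, |φ ω| ≤ ε + S.indicator (fun _ => C) ω := fun ω => by
    by_cases hω : ω ∈ S
    · rw [Set.indicator_of_mem hω]; linarith [hC ω]
    · rw [Set.indicator_of_notMem hω, add_zero]
      exact not_lt.1 fun h => hω (subset_toMeasurable _ _ h)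
  calc |∫ ω, φ ω ∂μ| ≤ ∫ ω, |φ ω| ∂μ := abs_integral_le_integral_abs
    _ ≤ ∫ ω, (ε + S.indicator (fun _ => C) ω) ∂μ :=
        integral_mono hφ.abs ((integrable_const ε).add ((integrable_const C).indicator hS)) hpt
    _ = ε + C * μ.real {ω | ε < |φ ω|} := by
        simp [integral_add (integrable_const ε) ((integrable_const C).indicator hS),
          integral_indicator_const _ hS, S, measureReal_def, measure_toMeasurable, mul_comm]

theorem abs_integral_sub_le_of_abs_sub_le [IsProbabilityMeasure μ] {U V : Ω → ℝ}
    (hU : Integrable U μ) (hV : Integrable V μ) {ε C : ℝ} (hε : 0 ≤ ε)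
    (hC : ∀ ω, |U ω - V ω| ≤ C) {A G : Set Ω} (hA : μ.real A ≤ ε) (hG : 1 - ε ≤ μ.real G)
    (hclose : ∀ ω ∈ G, ω ∉ A → |U ω - V ω| ≤ ε) :
    |∫ ω, U ω ∂μ - ∫ ω, V ω ∂μ| ≤ ε + C * (2 * ε) := by
  obtain ⟨ω₀⟩ := nonempty_of_isProbabilityMeasure μ
  have hbad : G ∩ {ω | ε < |U ω - V ω|} ⊆ A := fun ω ⟨hωG, hωbad⟩ =>
    not_not.1 fun hωA => (show ε < |U ω - V ω| from hωbad).not_ge (hclose ω hωG hωA)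
  have hnull : NullMeasurableSet {ω | ε < |U ω - V ω|} μ :=
    nullMeasurableSet_lt aemeasurable_const (hU.sub hV).1.aemeasurable.abs
  -- `G` need not be measurable, so split it along the bad set instead of bounding `μ Gᶜ`
  have hμbad : μ.real {ω | ε < |U ω - V ω|} ≤ 2 * ε := by
    linarith [measureReal_le_one_sub_add_inter hnull G, measureReal_mono (μ := μ) hbad]
  rw [← integral_sub hU hV]
  exact (abs_integral_le_add_mul_measureReal (hU.sub hV) hε hC).trans <|
    add_le_add_right (mul_le_mul_of_nonneg_left hμbad ((abs_nonneg _).trans (hC ω₀))) _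

end OuterMeasure

theorem tendsto_nhds_zero_of_forall_eventually_abs_le_mul {a : ℕ → ℝ} (C : ℝ)
    (h : ∀ ε > 0, ∀ᶠ n in atTop, |a n| ≤ C * ε) : Tendsto a atTop (𝓝 0) := by
  refine Metric.tendsto_nhds.2 fun ε hε => ?_
  have hC : 0 < |C| + 1 := by positivity
  filter_upwards [h (ε / (2 * (|C| + 1))) (by positivity)] with n hn
  rw [Real.dist_0_eq_abs]
  calc |a n| ≤ C * (ε / (2 * (|C| + 1))) := hn
    _ ≤ (|C| + 1) * (ε / (2 * (|C| + 1))) := by gcongr; linarith [le_abs_self C]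
    _ < ε := by field_simp; linarith

section Distribution

variable {Ω : Type*} [MeasurableSpace Ω] {μ : Measure Ω} [IsProbabilityMeasure μ]

theorem TendstoInDistribution.eventually_integrable {E : Type*} [MeasurableSpace E]
    [TopologicalSpace E] [OpensMeasurableSpace E] {X : ℕ → Ω → E} {γ : Measure E}
    [IsProbabilityMeasure γ] (hX : TendstoInDistribution X μ γ) (f : BoundedContinuousFunction E ℝ) :
    ∀ᶠ n in atTop, Integrable (fun ω => f (X n ω)) μ := by
  set g := f + BoundedContinuousFunction.const E (‖f‖ + 1)
  have hg : ∀ x, 1 ≤ g x := fun x => by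
    change 1 ≤ f x + (‖f‖ + 1)
    linarith [neg_le_of_abs_le (f.norm_coe_le_norm x)]
  have hpos : 0 < ∫ x, g x ∂γ := by
    have := integral_mono (integrable_const 1) (g.integrable γ) hg
    simp only [integral_const, probReal_univ, smul_eq_mul, mul_one] at this
    linarith
  filter_upwards [(hX g).eventually_const_lt hpos] with n hn
  exact ((Integrable.of_integral_ne_zero hn.ne').sub (integrable_const (‖f‖ + 1))).congr
    (ae_of_all _ fun ω => by simp [g])

variable {E : Type*} [NormedAddCommGroup E]

noncomputable def normRamp (M : ℝ) : BoundedContinuousFunction E ℝ :=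
  .mkOfBound ⟨fun x => min 1 (max (‖x‖ - M) 0), by fun_prop⟩ 1 fun x y =>
    Real.dist_le_of_mem_Icc_01 ⟨le_min zero_le_one (le_max_right _ _), min_le_left _ _⟩
      ⟨le_min zero_le_one (le_max_right _ _), min_le_left _ _⟩

theorem normRamp_nonneg (M : ℝ) (x : E) : 0 ≤ normRamp M x :=
  le_min zero_le_one (le_max_right _ _)

theorem normRamp_le_one (M : ℝ) (x : E) : normRamp M x ≤ 1 := min_le_left _ _

theorem normRamp_eq_zero {M : ℝ} {x : E} (hx : ‖x‖ ≤ M) : normRamp M x = 0 := by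
  change min 1 (max (‖x‖ - M) 0) = 0
  rw [max_eq_right (by linarith), min_eq_right zero_le_one]

theorem normRamp_eq_one {M : ℝ} {x : E} (hx : M + 1 ≤ ‖x‖) : normRamp M x = 1 :=
  min_eq_left (le_max_of_le_left (by linarith))

variable [MeasurableSpace E] [OpensMeasurableSpace E]

theorem tendsto_integral_normRamp (γ : Measure E) [IsFiniteMeasure γ] :
    Tendsto (fun M => ∫ x, normRamp M x ∂γ) atTop (𝓝 0) := by
  have hbound : ∀ M (x : E), ‖normRamp M x‖ ≤ 1 := fun M x => by
    rw [Real.norm_of_nonneg (normRamp_nonneg M x)]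
    exact normRamp_le_one M x
  have hlim : ∀ x : E, Tendsto (fun M => normRamp M x) atTop (𝓝 0) := fun x =>
    tendsto_const_nhds.congr' <|
      (eventually_ge_atTop ‖x‖).mono fun M hM => (normRamp_eq_zero hM).symm
  simpa using tendsto_integral_filter_of_dominated_convergence (fun _ => 1)
    (Eventually.of_forall fun M => (normRamp M).continuous.aestronglyMeasurable)
    (Eventually.of_forall fun M => ae_of_all _ (hbound M)) (integrable_const 1)
    (ae_of_all _ hlim)

theorem TendstoInDistribution.exists_eventually_measureReal_norm_gt_le
    {X : ℕ → Ω → E} {γ : Measure E} [IsProbabilityMeasure γ]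
    (hX : TendstoInDistribution X μ γ) {ε : ℝ} (hε : 0 < ε) :
    ∃ M, ∀ᶠ n in atTop, μ.real {ω | M < ‖X n ω‖} ≤ ε := by
  obtain ⟨M, hM⟩ := ((tendsto_integral_normRamp γ).eventually (gt_mem_nhds hε)).exists
  refine ⟨M + 1, ?_⟩
  filter_upwards [hX.eventually_integrable (normRamp M),
    (hX (normRamp M)).eventually (gt_mem_nhds hM)] with n hint hlt
  calc μ.real {ω | M + 1 < ‖X n ω‖} ≤ μ.real {ω | 1 ≤ normRamp M (X n ω)} :=
        measureReal_mono fun ω hω => (normRamp_eq_one (le_of_lt hω)).ge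
    _ ≤ ∫ ω, normRamp M (X n ω) ∂μ := by
        simpa using mul_meas_ge_le_integral_of_nonneg
          (ae_of_all _ fun ω => normRamp_nonneg M (X n ω)) hint 1
    _ ≤ ε := hlt.le

end Distribution

theorem TendstoInDistribution.map_of_tendsto_measure_dist_le
    {Ω E F : Type*} [MeasurableSpace Ω] {μ : Measure Ω} [IsProbabilityMeasure μ]
    [NormedAddCommGroup E] [ProperSpace E] [MeasurableSpace E] [OpensMeasurableSpace E]
    [PseudoMetricSpace F] [MeasurableSpace F] [BorelSpace F]
    {X : ℕ → Ω → E} {Y : ℕ → Ω → F} {γ : Measure E} [IsProbabilityMeasure γ]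
    (hX : TendstoInDistribution X μ γ) (hY : ∀ n, AEMeasurable (Y n) μ)
    {L : E → F} (hL : Continuous L)
    (hclose : ∀ δ > 0, ∀ M, Tendsto
      (fun n => μ {ω | ‖X n ω‖ ≤ M → dist (Y n ω) (L (X n ω)) ≤ δ}) atTop (𝓝 1)) :
    TendstoInDistribution Y μ (γ.map L) := by
  intro f
  set g := f.compContinuous ⟨L, hL⟩
  rw [integral_map hL.aemeasurable f.continuous.aestronglyMeasurable]
  suffices Tendsto (fun n => ∫ ω, f (Y n ω) ∂μ - ∫ ω, g (X n ω) ∂μ) atTop (𝓝 0) by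
    simpa [g] using this.add (hX g)
  refine tendsto_nhds_zero_of_forall_eventually_abs_le_mul (1 + 4 * ‖f‖) fun ε hε => ?_
  obtain ⟨M, hM⟩ := hX.exists_eventually_measureReal_norm_gt_le hε
  obtain ⟨δ, hδ, hfδ⟩ := Metric.mem_uniformity_dist.1 <|
    ((isCompact_closedBall 0 M).image hL).uniformContinuousAt_of_continuousAt f
      (fun _ _ => f.continuous.continuousAt) (Metric.dist_mem_uniformity hε)
  set G := fun n => {ω | ‖X n ω‖ ≤ M → dist (Y n ω) (L (X n ω)) ≤ δ / 2}
  have hG : ∀ᶠ n in atTop, 1 - ε < μ.real (G n) :=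
    ((ENNReal.tendsto_toReal ENNReal.one_ne_top).comp (hclose _ (half_pos hδ) M)).eventually
      (lt_mem_nhds (by simpa using hε))
  filter_upwards [hM, hG, hX.eventually_integrable g] with n hMn hGn hgn
  have hfY : Integrable (fun ω => f (Y n ω)) μ :=
    (integrable_const ‖f‖).mono'
      (f.continuous.measurable.comp_aemeasurable (hY n)).aestronglyMeasurable
      (ae_of_all _ fun ω => f.norm_coe_le_norm _)
  refine (abs_integral_sub_le_of_abs_sub_le hfY hgn hε.le
    (fun ω => (Real.dist_eq _ _).symm.trans_le (f.dist_le_two_norm (Y n ω) (L (X n ω))))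
    hMn hGn.le fun ω hωG hωM => ?_).trans_eq (by ring)
  have hXM : ‖X n ω‖ ≤ M := not_lt.1 hωM
  have hfclose : dist (f (L (X n ω))) (f (Y n ω)) < ε := hfδ
    (by rw [dist_comm]; exact (hωG hXM).trans_lt (half_lt_self hδ))
    ⟨X n ω, by simpa using hXM, rfl⟩
  rw [dist_comm, Real.dist_eq] at hfclose
  exact hfclose.le

section Linearization

variable {Ω : Type*} [MeasurableSpace Ω] {μ : Measure Ω}

theorem tendsto_measure_opNorm_sub_toEuclideanCLM_gt {ι : Type*} [Fintype ι] [DecidableEq ι]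
    {D : ℕ → Ω → EuclideanSpace ℝ ι →L[ℝ] EuclideanSpace ℝ ι} {A : Matrix ι ι ℝ}
    (hD : ∀ ε > 0, ∀ i j, Tendsto
      (fun n => μ {ω | ε < |D n ω (EuclideanSpace.single j 1) i - A i j|}) atTop (𝓝 0)) :
    ∀ ε > 0, Tendsto (fun n => μ {ω | ε < ‖D n ω - toEuclideanCLM (𝕜 := ℝ) A‖}) atTop (𝓝 0) := by
  intro ε hε
  have hsum := tendsto_measure_sum_lt Finset.univ
    (fun j _ => tendsto_measure_sum_lt Finset.univ fun i _ ε hε => hD ε hε i j) ε hε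
  refine tendsto_of_tendsto_of_tendsto_of_le_of_le tendsto_const_nhds hsum (fun _ => zero_le)
    fun n => measure_mono fun ω hω => (show ε < _ from hω).trans_le ?_
  refine (ContinuousLinearMap.opNorm_le_sum_abs_apply_single _).trans_eq ?_
  simp [Matrix.toEuclideanCLM_single_apply]

variable [IsProbabilityMeasure μ] {E F : Type*} [NormedAddCommGroup E] [NormedSpace ℝ E]
  [NormedAddCommGroup F] [NormedSpace ℝ F]

theorem tendsto_measure_norm_smul_sub_add_leftInverse_apply_le
    {u : ℕ → Ω → E → F} (hu : ∀ n ω, Differentiable ℝ (u n ω))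
    (hu' : ∀ n ω, Differentiable ℝ (fderiv ℝ (u n ω)))
    {θ₀ : E} {θhat : ℕ → Ω → E} (hroot : ∀ n ω, u n ω (θhat n ω) = 0)
    (hconsist : ∀ ε > 0, Tendsto (fun n => μ {ω | ε < ‖θhat n ω - θ₀‖}) atTop (𝓝 0))
    {T : E →L[ℝ] F} {S : F →L[ℝ] E} (hST : ∀ y, S (T y) = y)
    (hJac : ∀ ε > 0, Tendsto (fun n => μ {ω | ε < ‖fderiv ℝ (u n ω) θ₀ - T‖}) atTop (𝓝 0))
    {B : Set E} (hB : B ∈ 𝓝 θ₀) {κ : ℝ}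
    (hHess : Tendsto (fun n => μ {ω | ∀ θ ∈ B, ‖fderiv ℝ (fderiv ℝ (u n ω)) θ‖ ≤ κ})
      atTop (𝓝 1))
    (s : ℕ → ℝ) (hs : ∀ n, 0 ≤ s n) {δ : ℝ} (hδ : 0 < δ) (M : ℝ) :
    Tendsto (fun n => μ {ω | ‖s n • u n ω θ₀‖ ≤ M →
      ‖s n • (θhat n ω - θ₀) + S (s n • u n ω θ₀)‖ ≤ δ}) atTop (𝓝 1) := by
  obtain ⟨η, ⟨hηS, hηM⟩, hη⟩ :
      ∃ η, (‖S‖ * η ≤ 1 / 2 ∧ 2 * ‖S‖ ^ 2 * η * M ≤ δ) ∧ 0 < η := by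
    have h1 : Tendsto (fun η : ℝ => ‖S‖ * η) (𝓝 0) (𝓝 0) := by
      simpa using (by fun_prop : Continuous fun η : ℝ => ‖S‖ * η).tendsto 0
    have h2 : Tendsto (fun η : ℝ => 2 * ‖S‖ ^ 2 * η * M) (𝓝 0) (𝓝 0) := by
      simpa using (by fun_prop : Continuous fun η : ℝ => 2 * ‖S‖ ^ 2 * η * M).tendsto 0
    exact (((h1.eventually (eventually_le_nhds one_half_pos)).and
      (h2.eventually (eventually_le_nhds hδ))).filter_mono nhdsWithin_le_nhds |>.and
        (self_mem_nhdsWithin (s := Set.Ioi 0) (a := 0))).exists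
  obtain ⟨r, ⟨hrB, hrκ⟩, hr⟩ :
      ∃ r, (Metric.closedBall θ₀ r ⊆ B ∧ κ * r ≤ η / 2) ∧ 0 < r := by
    have hκr : Tendsto (fun r : ℝ => κ * r) (𝓝 0) (𝓝 0) := by
      simpa using (by fun_prop : Continuous fun r : ℝ => κ * r).tendsto 0
    exact (((eventually_closedBall_subset hB).and
      (hκr.eventually (eventually_le_nhds (half_pos hη)))).filter_mono nhdsWithin_le_nhds |>.and
        (self_mem_nhdsWithin (s := Set.Ioi 0) (a := 0))).exists
  refine tendsto_measure_of_sdiff_subset hHess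
    (C := fun n => {ω | r < ‖θhat n ω - θ₀‖} ∪ {ω | η / 2 < ‖fderiv ℝ (u n ω) θ₀ - T‖})
    (tendsto_of_tendsto_of_tendsto_of_le_of_le tendsto_const_nhds
      (by simpa using (hconsist r hr).add (hJac _ (half_pos hη))) (fun _ => zero_le)
      fun n => measure_union_le _ _) ?_
  rintro n ω ⟨hH, hC⟩ hM
  simp only [Set.mem_union, Set.mem_ofPred_eq, not_or, not_lt] at hC
  have hκ : 0 ≤ κ := (ContinuousLinearMap.opNorm_nonneg _).trans (hH θ₀ (mem_of_mem_nhds hB))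
  have hηD : κ * r + ‖fderiv ℝ (u n ω) θ₀ - T‖ ≤ η := by linarith
  calc ‖s n • (θhat n ω - θ₀) + S (s n • u n ω θ₀)‖
      ≤ 2 * ‖S‖ ^ 2 * (κ * r + ‖fderiv ℝ (u n ω) θ₀ - T‖) * ‖s n • u n ω θ₀‖ :=
        norm_smul_sub_add_leftInverse_apply_le (hu n ω) (hu' n ω) (hroot n ω)
          (fun θ hθ => hH θ (hrB hθ)) hC.1 hST (hs n)
          ((mul_le_mul_of_nonneg_left hηD (norm_nonneg _)).trans hηS)
    _ ≤ 2 * ‖S‖ ^ 2 * η * M := by gcongr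
    _ ≤ δ := hηM

end Linearization

theorem dmcle_asymptotic_normality_general {Ω : Type*} [MeasurableSpace Ω] (μ : Measure Ω)
    [IsProbabilityMeasure μ]
    (p : ℕ)
    (θstar : EuclideanSpace ℝ (Fin p))
    (u : ℕ → Ω → EuclideanSpace ℝ (Fin p) → EuclideanSpace ℝ (Fin p))
    (hsmooth : ∀ n ω, ContDiff ℝ 2 (u n ω))
    (θhat : ℕ → Ω → EuclideanSpace ℝ (Fin p))
    (hmeas : ∀ n, Measurable (θhat n))
    (hroot : ∀ n ω, u n ω (θhat n ω) = 0)
    -- (i) consistency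
    (hconsist : ∀ ε > 0,
      Tendsto (fun n => μ {ω | ε < ‖θhat n ω - θstar‖}) atTop (𝓝 0))
    -- (ii) CLT for the score at θ*
    (K : Matrix (Fin p) (Fin p) ℝ)
    (γK : Measure (EuclideanSpace ℝ (Fin p))) (hγKprob : IsProbabilityMeasure γK)
    (hγK : IsCenteredGaussianCov γK K)
    (hCLT : TendstoInDistribution
      (fun n ω => (Real.sqrt n) • u n ω θstar) μ γK)
    -- (iii) convergence in probability of the Jacobian to an invertible matrix A
    (A : Matrix (Fin p) (Fin p) ℝ) (hA : IsUnit A.det)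
    (hJac : ∀ ε > 0, ∀ i j : Fin p,
      Tendsto (fun n => μ {ω |
          ε < |fderiv ℝ (u n ω) θstar (EuclideanSpace.single j 1) i - A i j|})
        atTop (𝓝 0))
    -- (iv) second derivatives uniformly bounded near θ* w.p. → 1
    (B : Set (EuclideanSpace ℝ (Fin p))) (hB : B ∈ 𝓝 θstar) (κ : ℝ)
    (hHess : Tendsto
      (fun n => μ {ω | ∀ θ ∈ B, ‖fderiv ℝ (fderiv ℝ (u n ω)) θ‖ ≤ κ})
      atTop (𝓝 1)) :
    ∃ γ : Measure (EuclideanSpace ℝ (Fin p)), IsProbabilityMeasure γ ∧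
      IsCenteredGaussianCov γ (A⁻¹ * K * (A⁻¹)ᵀ) ∧
      TendstoInDistribution
        (fun n ω => (Real.sqrt n) • (θhat n ω - θstar)) μ γ := by
  let S := toEuclideanCLM (𝕜 := ℝ) A⁻¹
  let L := toEuclideanCLM (𝕜 := ℝ) (-A⁻¹)
  have hST : ∀ y, S (toEuclideanCLM (𝕜 := ℝ) A y) = y := fun y => by
    rw [← mul_apply_eq_comp, ← map_mul, nonsing_inv_mul A hA, map_one, one_apply_eq_self]
  have hLS : L = -S := map_neg _ _
  have hgauss : IsCenteredGaussianCov (γK.map L) (A⁻¹ * K * (A⁻¹)ᵀ) := by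
    simpa only [transpose_neg, neg_mul, mul_neg, neg_neg] using hγK.map_toEuclideanCLM (-A⁻¹)
  have hY (n : ℕ) : AEMeasurable (fun ω => Real.sqrt n • (θhat n ω - θstar)) μ := by
    have := hmeas n
    fun_prop
  have hu n ω : Differentiable ℝ (u n ω) := (hsmooth n ω).differentiable (by norm_num)
  have hu' n ω : Differentiable ℝ (fderiv ℝ (u n ω)) :=
    ((hsmooth n ω).fderiv_right (m := 1) (by norm_num)).differentiable (by norm_num)
  refine ⟨γK.map L, Measure.isProbabilityMeasure_map L.continuous.aemeasurable, hgauss,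
    hCLT.map_of_tendsto_measure_dist_le hY L.continuous fun δ hδ M => ?_⟩
  simpa [hLS, dist_eq_norm] using tendsto_measure_norm_smul_sub_add_leftInverse_apply_le hu hu'
    hroot hconsist hST (tendsto_measure_opNorm_sub_toEuclideanCLM_gt hJac) hB hHess
    (fun n => Real.sqrt n) (fun n => Real.sqrt_nonneg _) hδ M

/-- Proposition 2 (asymptotic normality): if `θ̂_n` solves the estimating equation
`u_n(·, θ̂_n) = 0`, is consistent for `θ*`, `√n u_n(·, θ*) →d N_p(0, K)`, the Jacobian
`∇_θ u_n(·, θ*)` converges in probability to an invertible matrix `A`, and the second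
derivatives are uniformly bounded near `θ*` with probability tending to one, then
`√n (θ̂_n − θ*) →d N_p(0, A⁻¹ K (A⁻¹)ᵀ)`. -/
theorem dmcle_asymptotic_normality {Ω : Type*} [MeasurableSpace Ω] (μ : Measure Ω)
    [IsProbabilityMeasure μ]
    (p : ℕ) (Θ : Set (EuclideanSpace ℝ (Fin p))) (hΘ : IsOpen Θ)
    (θstar : EuclideanSpace ℝ (Fin p)) (hθstar : θstar ∈ Θ)
    (u : ℕ → Ω → EuclideanSpace ℝ (Fin p) → EuclideanSpace ℝ (Fin p))
    (hsmooth : ∀ n ω, ContDiff ℝ 2 (u n ω))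
    (θhat : ℕ → Ω → EuclideanSpace ℝ (Fin p))
    (hmeas : ∀ n, Measurable (θhat n))
    (hroot : ∀ n ω, u n ω (θhat n ω) = 0)
    -- (i) consistency
    (hconsist : ∀ ε > 0,
      Tendsto (fun n => μ {ω | ε < ‖θhat n ω - θstar‖}) atTop (𝓝 0))
    -- (ii) CLT for the score at θ*
    (K : Matrix (Fin p) (Fin p) ℝ) (hK : K.PosSemidef)
    (γK : Measure (EuclideanSpace ℝ (Fin p))) (hγKprob : IsProbabilityMeasure γK)
    (hγK : IsCenteredGaussianCov γK K)
    (hCLT : TendstoInDistribution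
      (fun n ω => (Real.sqrt n) • u n ω θstar) μ γK)
    -- (iii) convergence in probability of the Jacobian to an invertible matrix A
    (A : Matrix (Fin p) (Fin p) ℝ) (hA : IsUnit A.det)
    (hJac : ∀ ε > 0, ∀ i j : Fin p,
      Tendsto (fun n => μ {ω |
          ε < |fderiv ℝ (u n ω) θstar (EuclideanSpace.single j 1) i - A i j|})
        atTop (𝓝 0))
    -- (iv) second derivatives uniformly bounded near θ* w.p. → 1
    (B : Set (EuclideanSpace ℝ (Fin p))) (hB : B ∈ 𝓝 θstar) (κ : ℝ)
    (hHess : Tendsto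
      (fun n => μ {ω | ∀ θ ∈ B, ‖fderiv ℝ (fderiv ℝ (u n ω)) θ‖ ≤ κ})
      atTop (𝓝 1)) :
    ∃ γ : Measure (EuclideanSpace ℝ (Fin p)), IsProbabilityMeasure γ ∧
      IsCenteredGaussianCov γ (A⁻¹ * K * (A⁻¹)ᵀ) ∧
      TendstoInDistribution
        (fun n ω => (Real.sqrt n) • (θhat n ω - θstar)) μ γ :=
  dmcle_asymptotic_normality_general μ p θstar u hsmooth θhat hmeas hroot hconsist K γK hγKprob hγK
    hCLT A hA hJac B hB κ hHess
end
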